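/- arXiv:1510.06055 — 4 statements merged into one kernel-verified Lean document; each statement's English description precedes it below -/
import Mathlib

section
/- Monotonicity of resilience: for any two bags A and B with A ⊆ B, γ(A) ≤ γ(B). -/
open Finset

variable {V : Type*} [Fintype V] [DecidableEq V]

/-- The cut of a bag `A`: the number of edges of `G` with exactly one endpoint in `A`. -/
def cut (G : SimpleGraph V) [DecidableRel G.Adj] (A : Finset V) : ℕ :=
  ((A ×ˢ Aᶜ).filter fun p => G.Adj p.1 p.2).card

/-- An `(A–B)`-crusade of length `k+1`: a sequence of bags starting at `A`, ending at `B`,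
removing at most one node at each step. -/
def IsCrusade (A B : Finset V) (k : ℕ) (ω : ℕ → Finset V) : Prop :=
  ω 0 = A ∧ ω k = B ∧ ∀ i < k, (ω i \ ω (i + 1)).card ≤ 1

/-- The width of a crusade: the maximum cut encountered after the first bag. -/
def width (G : SimpleGraph V) [DecidableRel G.Adj] (k : ℕ) (ω : ℕ → Finset V) : ℕ :=
  (Finset.Icc 1 k).sup fun i => cut G (ω i)

/-- The resilience of a bag `A`: the minimum width over all `(A–∅)`-crusades. -/
noncomputable def resilience (G : SimpleGraph V) [DecidableRel G.Adj] (A : Finset V) : ℕ :=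
  sInf {w | ∃ (k : ℕ) (ω : ℕ → Finset V), IsCrusade A ∅ k ω ∧ width G k ω = w}

/-- A crusade is monotone if each bag contains the next. -/
def IsMonotone (k : ℕ) (ω : ℕ → Finset V) : Prop :=
  ∀ i < k, ω (i + 1) ⊆ ω i

/-- The CutWidth of `G`: the minimum width over all monotone `(V–∅)`-crusades. -/
noncomputable def cutWidth (G : SimpleGraph V) [DecidableRel G.Adj] : ℕ :=
  sInf {w | ∃ (k : ℕ) (ω : ℕ → Finset V),
    IsCrusade Finset.univ ∅ k ω ∧ IsMonotone k ω ∧ width G k ω = w}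

/-- Every bag admits a crusade to the empty bag: remove its elements one at a time. -/
theorem crusade_exists (B : Finset V) : ∃ k ω, IsCrusade B ∅ k ω := by
  induction B using Finset.induction with
  | empty => exact ⟨0, fun _ => ∅, rfl, rfl, by simp⟩
  | @insert a s ha ih =>
    obtain ⟨k, ω, h0, hk, hstep⟩ := ih
    refine ⟨k + 1, fun i => if i = 0 then insert a s else ω (i - 1), by simp, by simp [hk], ?_⟩
    intro i hi
    rcases Nat.eq_zero_or_pos i with rfl | hpos
    · simp [h0, Finset.insert_sdiff_of_notMem _ ha]
    · have hine : i ≠ 0 := Nat.pos_iff_ne_zero.mp hpos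
      have h1 : i + 1 - 1 = i := rfl
      have h2 : i - 1 + 1 = i := Nat.succ_pred_eq_of_pos hpos
      simp only [if_neg hine, if_neg (Nat.succ_ne_zero i), h1]
      have := hstep (i - 1) (by omega)
      rwa [h2] at this

theorem resilience_monotone (G : SimpleGraph V) [DecidableRel G.Adj]
    (hconn : G.Connected) (hΔ : 0 < G.maxDegree) (A B : Finset V) (hAB : A ⊆ B) :
    resilience G A ≤ resilience G B := by
  apply le_csInf
  · obtain ⟨k, ω, h⟩ := crusade_exists (V := V) B
    exact ⟨width G k ω, k, ω, h, rfl⟩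
  · rintro w ⟨k, ω, ⟨h0, hk, hstep⟩, hw⟩
    rcases Nat.eq_zero_or_pos k with rfl | hkpos
    · have hB : B = ∅ := h0 ▸ hk
      have hA : A = ∅ := Finset.subset_empty.mp (hB ▸ hAB)
      have : resilience G A ≤ 0 :=
        csInf_le (OrderBot.bddBelow _)
          ⟨0, fun _ => ∅, ⟨by simp [hA], rfl, by simp⟩, by simp [width]⟩
      exact le_trans this (Nat.zero_le _)
    · have hkne : k ≠ 0 := Nat.pos_iff_ne_zero.mp hkpos
      refine csInf_le (OrderBot.bddBelow _)
        ⟨k, fun i => if i = 0 then A else ω i, ⟨by simp, by simp [hkne, hk], ?_⟩, ?_⟩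
      · intro i hi
        rcases Nat.eq_zero_or_pos i with rfl | hipos
        · have h1 : (B \ ω 1).card ≤ 1 := by
            have := hstep 0 hkpos; simpa [h0] using this
          simp only [if_pos rfl, if_neg one_ne_zero]
          exact le_trans (Finset.card_le_card (Finset.sdiff_subset_sdiff hAB subset_rfl)) h1
        · have hine : i ≠ 0 := Nat.pos_iff_ne_zero.mp hipos
          simpa [hine] using hstep i hi
      · rw [← hw]
        unfold width
        apply Finset.sup_congr rfl
        intro i hi
        have : i ≠ 0 := by
          have := (Finset.mem_Icc.mp hi).1; omega
        simp [this]
end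

section
/- Smoothness of resilience: for any bag A and any vertex v ∉ A, γ(A ∪ {v}) ≤ γ(A) + Δ, where Δ is the maximum degree of the graph. -/
open Finset

variable {V : Type*} [Fintype V] [DecidableEq V]

/-!
Take an optimal `(A–∅)`-crusade, add `v` to every bag, and finish with the single step
`{v} → ∅`. Adding one vertex to a bag raises its cut by at most `deg v ≤ Δ`, and the last bag
is empty, so the new crusade has width at most `γ(A) + Δ`.
-/

section Cut

variable (G : SimpleGraph V) [DecidableRel G.Adj]

lemma cut_empty : cut G (∅ : Finset V) = 0 := by
  simp [cut]

lemma cut_insert_le (v : V) (B : Finset V) : cut G (insert v B) ≤ cut G B + G.degree v := by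
  have hsub : ((insert v B ×ˢ (insert v B)ᶜ).filter fun p => G.Adj p.1 p.2) ⊆
      ((B ×ˢ Bᶜ).filter fun p => G.Adj p.1 p.2) ∪ {v} ×ˢ G.neighborFinset v := by
    rintro ⟨x, y⟩ hp
    simp only [mem_filter, mem_product, mem_insert, mem_compl, not_or] at hp
    obtain ⟨⟨rfl | hx, hyv, hy⟩, hadj⟩ := hp
    · simp [hadj]
    · simp [hx, hy, hadj]
  calc cut G (insert v B)
      ≤ cut G B + #({v} ×ˢ G.neighborFinset v) := (card_le_card hsub).trans (card_union_le _ _)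
    _ = cut G B + G.degree v := by simp

end Cut

section Crusade

omit [Fintype V]

namespace IsCrusade

variable {A B C : Finset V} {k : ℕ} {ω : ℕ → Finset V}

lemma insert (hω : IsCrusade A B k ω) (v : V) :
    IsCrusade (insert v A) (insert v B) k fun i => insert v (ω i) := by
  obtain ⟨h0, hk, hstep⟩ := hω
  refine ⟨by simp [h0], by simp [hk], fun i hi => ?_⟩
  rw [insert_sdiff_insert]
  exact (card_le_card (sdiff_subset_sdiff subset_rfl (subset_insert _ _))).trans (hstep i hi)

lemma snoc (hω : IsCrusade A B k ω) (hBC : #(B \ C) ≤ 1) :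
    IsCrusade A C (k + 1) fun i => if i ≤ k then ω i else C := by
  obtain ⟨h0, hk, hstep⟩ := hω
  refine ⟨by simp [h0], by simp, fun i hi => ?_⟩
  rcases Nat.lt_or_eq_of_le (Nat.le_of_lt_succ hi) with hik | rfl
  · simpa [hik.le, Nat.succ_le_of_lt hik] using hstep i hik
  · simpa [hk] using hBC

end IsCrusade

lemma exists_isCrusade_empty (A : Finset V) : ∃ k ω, IsCrusade A ∅ k ω := by
  induction A using Finset.induction_on with
  | empty => exact ⟨0, fun _ => ∅, rfl, rfl, by omega⟩
  | insert a A _ ih =>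
    obtain ⟨k, ω, hω⟩ := ih
    exact ⟨k + 1, _, (hω.insert a).snoc (by simp)⟩

end Crusade

section Width

variable (G : SimpleGraph V) [DecidableRel G.Adj] (k : ℕ) (ω : ℕ → Finset V)

lemma width_insert_le (v : V) :
    width G k (fun i => insert v (ω i)) ≤ width G k ω + G.degree v :=
  Finset.sup_le fun i hi =>
    (cut_insert_le G v (ω i)).trans
      (Nat.add_le_add_right (le_sup (f := fun i => cut G (ω i)) hi) _)

lemma width_snoc_le (C : Finset V) :
    width G (k + 1) (fun i => if i ≤ k then ω i else C) ≤ max (width G k ω) (cut G C) := by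
  refine Finset.sup_le fun i hi => ?_
  by_cases hik : i ≤ k
  · simp only [hik, if_true]
    exact le_max_of_le_left
      (le_sup (f := fun i => cut G (ω i)) (mem_Icc.mpr ⟨(mem_Icc.mp hi).1, hik⟩))
  · simp only [hik, if_false]
    exact le_max_right _ _

end Width

section Resilience

variable (G : SimpleGraph V) [DecidableRel G.Adj]

lemma resilience_le_width {A : Finset V} {k : ℕ} {ω : ℕ → Finset V}
    (hω : IsCrusade A ∅ k ω) : resilience G A ≤ width G k ω :=
  Nat.sInf_le ⟨k, ω, hω, rfl⟩

lemma exists_width_eq_resilience (A : Finset V) :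
    ∃ k ω, IsCrusade A ∅ k ω ∧ width G k ω = resilience G A := by
  obtain ⟨k, ω, hω⟩ := exists_isCrusade_empty A
  exact Nat.sInf_mem (s := {w | ∃ k ω, IsCrusade A ∅ k ω ∧ width G k ω = w})
    ⟨width G k ω, k, ω, hω, rfl⟩

end Resilience

theorem resilience_smooth_general (G : SimpleGraph V) [DecidableRel G.Adj]
    (A : Finset V) (v : V) :
    resilience G (insert v A) ≤ resilience G A + G.maxDegree := by
  obtain ⟨k, ω, hω, hwidth⟩ := exists_width_eq_resilience G A
  have hcrusade := (hω.insert v).snoc (C := ∅) (by simp)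
  calc resilience G (insert v A)
      ≤ width G (k + 1) (fun i => if i ≤ k then insert v (ω i) else ∅) :=
        resilience_le_width G hcrusade
    _ ≤ max (width G k fun i => insert v (ω i)) (cut G ∅) := width_snoc_le G k _ ∅
    _ = width G k fun i => insert v (ω i) := by rw [cut_empty, max_eq_left (Nat.zero_le _)]
    _ ≤ width G k ω + G.degree v := width_insert_le G k ω v
    _ ≤ resilience G A + G.maxDegree := by
      rw [hwidth]
      exact Nat.add_le_add_left (G.degree_le_maxDegree v) _

theorem resilience_smooth (G : SimpleGraph V) [DecidableRel G.Adj]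
    (hconn : G.Connected) (hΔ : 0 < G.maxDegree) (A : Finset V) (v : V) (hv : v ∉ A) :
    resilience G (insert v A) ≤ resilience G A + G.maxDegree :=
  resilience_smooth_general G A v
end

section
/- For any finite connected graph G, the resilience of the full vertex set equals the CutWidth: γ(V) = W. In other words, the minimum width over all (V–∅)-crusades equals the minimum width over all monotone (V–∅)-crusades. -/
open Finset

variable {V : Type*} [Fintype V] [DecidableEq V]

lemma cut_eq_sum (G : SimpleGraph V) [DecidableRel G.Adj] (A : Finset V) :
    cut G A = ∑ p : V × V, if p.1 ∈ A ∧ p.2 ∉ A ∧ G.Adj p.1 p.2 then 1 else 0 := by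
  have : ((A ×ˢ Aᶜ).filter fun p => G.Adj p.1 p.2)
      = univ.filter (fun p : V × V => p.1 ∈ A ∧ p.2 ∉ A ∧ G.Adj p.1 p.2) := by
    ext p; simp [Finset.mem_product]; tauto
  rw [cut, this, Finset.card_filter]

lemma cut_submodular (G : SimpleGraph V) [DecidableRel G.Adj] (A B : Finset V) :
    cut G (A ∪ B) + cut G (A ∩ B) ≤ cut G A + cut G B := by
  simp only [cut_eq_sum, ← Finset.sum_add_distrib]
  apply Finset.sum_le_sum
  intro p _
  by_cases h1 : p.1 ∈ A <;> by_cases h2 : p.1 ∈ B <;> by_cases h3 : p.2 ∈ A <;>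
    by_cases h4 : p.2 ∈ B <;> simp [Finset.mem_union, Finset.mem_inter, h1, h2, h3, h4]

/-- existence of a monotone crusade from any bag to ∅ -/
lemma exists_monotone_crusade (A : Finset V) :
    ∃ (k : ℕ) (ω : ℕ → Finset V), IsCrusade A ∅ k ω ∧ IsMonotone k ω := by
  induction A using Finset.induction_on with
  | empty => exact ⟨0, fun _ => ∅, ⟨rfl, rfl, by omega⟩, by intro i h; omega⟩
  | @insert a s ha ih =>
    obtain ⟨k, ω, ⟨h0, hk, hstep⟩, hmono⟩ := ih
    refine ⟨k + 1, fun j => match j with | 0 => insert a s | j+1 => ω j, ⟨rfl, hk, ?_⟩, ?_⟩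
    · intro i hi
      match i with
      | 0 =>
        simp only [h0]
        have : insert a s \ s = {a} := by
          ext x
          simp only [Finset.mem_sdiff, Finset.mem_insert, Finset.mem_singleton]
          constructor
          · rintro ⟨h | h, h2⟩
            · exact h
            · exact absurd h h2
          · rintro rfl; exact ⟨Or.inl rfl, ha⟩
        simp [this]
      | i+1 => exact hstep i (by omega)
    · intro i hi
      match i with
      | 0 => simp [h0]
      | i+1 => exact hmono i (by omega)

lemma monotonize (G : SimpleGraph V) [DecidableRel G.Adj] (k w : ℕ)
    (ω : ℕ → Finset V) (hcr : IsCrusade (univ : Finset V) ∅ k ω) (hw : width G k ω ≤ w) :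
    ∃ ω', IsCrusade (univ : Finset V) ∅ k ω' ∧ IsMonotone k ω' ∧ width G k ω' ≤ w := by
  set B := (k + 1) * Fintype.card V + 1 with hB
  set M : (ℕ → Finset V) → ℕ := fun τ =>
    (∑ i ∈ Finset.range (k+1), cut G (τ i)) * B + ∑ i ∈ Finset.range (k+1), (τ i).card with hM
  -- card-sum is always < B
  have hcardB : ∀ τ : ℕ → Finset V, ∑ i ∈ Finset.range (k+1), (τ i).card < B := by
    intro τ
    have : ∑ i ∈ Finset.range (k+1), (τ i).card ≤ ∑ _i ∈ Finset.range (k+1), Fintype.card V :=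
      Finset.sum_le_sum fun i _ => Finset.card_le_univ _
    simp only [Finset.sum_const, Finset.card_range, smul_eq_mul] at this
    omega
  suffices H : ∀ (m : ℕ) (τ : ℕ → Finset V), M τ ≤ m → IsCrusade (univ : Finset V) ∅ k τ →
      width G k τ ≤ w →
      ∃ ω', IsCrusade (univ : Finset V) ∅ k ω' ∧ IsMonotone k ω' ∧ width G k ω' ≤ w by
    exact H (M ω) ω le_rfl hcr hw
  intro m
  induction m with
  | zero =>
    intro τ hMτ hcrτ hwτ
    simp only [hM] at hMτ
    have hcards : ∀ i < k + 1, (τ i).card = 0 := by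
      intro i hi
      have h1 : ∑ i ∈ Finset.range (k+1), (τ i).card = 0 := by omega
      have := Finset.sum_eq_zero_iff.mp h1 i (Finset.mem_range.mpr hi)
      exact this
    refine ⟨τ, hcrτ, ?_, hwτ⟩
    intro i hi
    have : (τ (i+1)).card = 0 := hcards (i+1) (by omega)
    rw [Finset.card_eq_zero.mp this]
    exact Finset.empty_subset _
  | succ m ih =>
    intro τ hMτ hcrτ hwτ
    by_cases hmono : IsMonotone k τ
    · exact ⟨τ, hcrτ, hmono, hwτ⟩
    · simp only [IsMonotone, not_forall] at hmono
      obtain ⟨i, hik, hnsub⟩ := hmono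
      obtain ⟨h0, hk, hstep⟩ := hcrτ
      -- i ≥ 1 since τ 0 = univ, and i + 1 < k since τ k = ∅
      have hi1 : 1 ≤ i := by
        by_contra h
        have : i = 0 := by omega
        subst this
        exact hnsub (by rw [h0]; exact Finset.subset_univ _)
      have hik1 : i + 1 < k := by
        rcases Nat.lt_or_ge (i+1) k with h | h
        · exact h
        · have : i + 1 = k := by omega
          exact absurd (by rw [this, hk]; exact Finset.empty_subset _) hnsub
      -- a useful element witnessing nonmonotonicity
      have hne : ∃ x, x ∈ τ (i+1) ∧ x ∉ τ i := by
        by_contra h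
        push_neg at h
        exact hnsub fun x hx => h x hx
      -- widths of individual bags
      have hcut_le : ∀ j, 1 ≤ j → j ≤ k → cut G (τ j) ≤ w := by
        intro j hj1 hj2
        rw [width] at hwτ
        exact le_trans (Finset.le_sup (f := fun i => cut G (τ i))
          (Finset.mem_Icc.mpr ⟨hj1, hj2⟩)) hwτ
      by_cases hc : cut G (τ i ∩ τ (i+1)) ≤ cut G (τ (i+1))
      · -- replace τ (i+1) by the intersection
        set τ' := Function.update τ (i+1) (τ i ∩ τ (i+1)) with hτ'
        have hτ'eq : ∀ j, j ≠ i + 1 → τ' j = τ j := fun j hj => Function.update_of_ne hj _ _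
        have hτ'i : τ' (i+1) = τ i ∩ τ (i+1) := Function.update_self _ _ _
        have hcr' : IsCrusade (univ : Finset V) ∅ k τ' := by
          refine ⟨by rw [hτ'eq 0 (by omega)]; exact h0, by rw [hτ'eq k (by omega)]; exact hk, ?_⟩
          intro j hj
          by_cases hji : j = i
          · subst hji
            rw [hτ'eq j (by omega), hτ'i]
            have : τ j \ (τ j ∩ τ (j+1)) = τ j \ τ (j+1) := by
              ext x; simp only [Finset.mem_sdiff, Finset.mem_inter, Finset.mem_union]; tauto
            rw [this]; exact hstep j hik
          · by_cases hji1 : j = i + 1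
            · subst hji1
              rw [hτ'i, hτ'eq (i+2) (by omega)]
              refine le_trans (Finset.card_le_card ?_) (hstep (i+1) hj)
              intro x hx
              simp only [Finset.mem_sdiff, Finset.mem_inter] at hx ⊢
              exact ⟨hx.1.2, hx.2⟩
            · rw [hτ'eq j hji1, hτ'eq (j+1) (by omega)]
              exact hstep j hj
        have hw' : width G k τ' ≤ w := by
          rw [width]
          apply Finset.sup_le
          intro j hj
          rw [Finset.mem_Icc] at hj
          by_cases hji1 : j = i + 1
          · rw [hji1, hτ'i]
            exact le_trans hc (hcut_le (i+1) (by omega) (by omega))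
          · rw [hτ'eq j hji1]; exact hcut_le j hj.1 hj.2
        have hMlt : M τ' < M τ := by
          have hc' : ∑ j ∈ Finset.range (k+1), cut G (τ' j) ≤ ∑ j ∈ Finset.range (k+1), cut G (τ j) := by
            apply Finset.sum_le_sum
            intro j _
            by_cases hji1 : j = i + 1
            · rw [hji1, hτ'i]; exact hc
            · rw [hτ'eq j hji1]
          have hcd : ∑ j ∈ Finset.range (k+1), (τ' j).card < ∑ j ∈ Finset.range (k+1), (τ j).card := by
            apply Finset.sum_lt_sum
            · intro j _
              by_cases hji1 : j = i + 1
              · rw [hji1, hτ'i]; exact Finset.card_le_card Finset.inter_subset_right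
              · rw [hτ'eq j hji1]
            · refine ⟨i+1, Finset.mem_range.mpr (by omega), ?_⟩
              rw [hτ'i]
              apply Finset.card_lt_card
              refine ⟨Finset.inter_subset_right, fun hsub => ?_⟩
              obtain ⟨x, hx1, hx2⟩ := hne
              have := hsub hx1
              rw [Finset.mem_inter] at this
              exact hx2 this.1
          exact add_lt_add_of_le_of_lt (Nat.mul_le_mul_right B hc') hcd
        exact ih τ' (by omega) hcr' hw'
      · -- replace τ i by the union
        push_neg at hc
        have hcutu : cut G (τ i ∪ τ (i+1)) < cut G (τ i) := by
          have := cut_submodular G (τ i) (τ (i+1))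
          omega
        set τ' := Function.update τ i (τ i ∪ τ (i+1)) with hτ'
        have hτ'eq : ∀ j, j ≠ i → τ' j = τ j := fun j hj => Function.update_of_ne hj _ _
        have hτ'i : τ' i = τ i ∪ τ (i+1) := Function.update_self _ _ _
        have hcr' : IsCrusade (univ : Finset V) ∅ k τ' := by
          refine ⟨by rw [hτ'eq 0 (by omega)]; exact h0, by rw [hτ'eq k (by omega)]; exact hk, ?_⟩
          intro j hj
          by_cases hji : j = i
          · subst hji
            rw [hτ'i, hτ'eq (j+1) (by omega)]
            have : (τ j ∪ τ (j+1)) \ τ (j+1) = τ j \ τ (j+1) := by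
              ext x; simp only [Finset.mem_sdiff, Finset.mem_inter, Finset.mem_union]; tauto
            rw [this]; exact hstep j hik
          · by_cases hji1 : j + 1 = i
            · rw [hτ'eq j hji, hji1, hτ'i]
              have hj' : j < k := hj
              have hsub : τ j \ (τ i ∪ τ (i+1)) ⊆ τ j \ τ i := by
                intro x hx
                simp only [Finset.mem_sdiff, Finset.mem_union] at hx ⊢
                exact ⟨hx.1, fun h => hx.2 (Or.inl h)⟩
              refine le_trans (Finset.card_le_card hsub) ?_
              have := hstep j hj; rwa [hji1] at this
            · rw [hτ'eq j hji, hτ'eq (j+1) (fun h => hji1 h)]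
              exact hstep j hj
        have hw' : width G k τ' ≤ w := by
          rw [width]
          apply Finset.sup_le
          intro j hj
          rw [Finset.mem_Icc] at hj
          by_cases hji : j = i
          · rw [hji, hτ'i]
            exact le_trans (le_of_lt hcutu) (hcut_le i hi1 (by omega))
          · rw [hτ'eq j hji]; exact hcut_le j hj.1 hj.2
        have hMlt : M τ' < M τ := by
          have hc' : ∑ j ∈ Finset.range (k+1), cut G (τ' j) < ∑ j ∈ Finset.range (k+1), cut G (τ j) := by
            apply Finset.sum_lt_sum
            · intro j _
              by_cases hji : j = i
              · rw [hji, hτ'i]; exact le_of_lt hcutu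
              · rw [hτ'eq j hji]
            · exact ⟨i, Finset.mem_range.mpr (by omega), by rw [hτ'i]; exact hcutu⟩
          have h1 := hcardB τ'
          have h2 := hcardB τ
          calc (∑ i ∈ Finset.range (k+1), cut G (τ' i)) * B + ∑ i ∈ Finset.range (k+1), (τ' i).card
              < (∑ i ∈ Finset.range (k+1), cut G (τ' i)) * B + B := by omega
            _ = ((∑ i ∈ Finset.range (k+1), cut G (τ' i)) + 1) * B := by ring
            _ ≤ (∑ i ∈ Finset.range (k+1), cut G (τ i)) * B := Nat.mul_le_mul_right B (by omega)
            _ ≤ M τ := Nat.le_add_right _ _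
        exact ih τ' (by omega) hcr' hw'

theorem resilience_univ_eq_cutWidth (G : SimpleGraph V) [DecidableRel G.Adj]
    (hconn : G.Connected) (hΔ : 0 < G.maxDegree) :
    resilience G Finset.univ = cutWidth G := by
  obtain ⟨k0, ω0, hcr0, hmono0⟩ := exists_monotone_crusade (Finset.univ : Finset V)
  have hTne : {w | ∃ (k : ℕ) (ω : ℕ → Finset V),
      IsCrusade Finset.univ ∅ k ω ∧ IsMonotone k ω ∧ width G k ω = w}.Nonempty :=
    ⟨width G k0 ω0, k0, ω0, hcr0, hmono0, rfl⟩
  have hSne : {w | ∃ (k : ℕ) (ω : ℕ → Finset V),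
      IsCrusade Finset.univ ∅ k ω ∧ width G k ω = w}.Nonempty :=
    ⟨width G k0 ω0, k0, ω0, hcr0, rfl⟩
  apply le_antisymm
  · -- resilience ≤ cutWidth
    obtain ⟨k, ω, hcr, hmono, hwd⟩ := Nat.sInf_mem hTne
    exact Nat.sInf_le ⟨k, ω, hcr, hwd⟩
  · -- cutWidth ≤ resilience
    obtain ⟨k, ω, hcr, hwd⟩ := Nat.sInf_mem hSne
    obtain ⟨ω', hcr', hmono', hw'⟩ := monotonize G k (width G k ω) ω hcr le_rfl
    calc cutWidth G ≤ width G k ω' := Nat.sInf_le ⟨k, ω', hcr', hmono', rfl⟩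
      _ ≤ width G k ω := hw'
      _ = resilience G Finset.univ := hwd
end

section
/- Suppose the CutWidth W of the graph satisfies W ≥ Δ. Then for any bag A with γ(A) < W, one has W ≤ (n − |A|)·Δ. -/
open Finset

variable {V : Type*} [Fintype V] [DecidableEq V]

/-!
Remove the vertices outside `A` one at a time: every bag then contains `A`, so its cut is at
most `(n - |A|) Δ`. Continue with an `(A–∅)`-crusade of width `γ(A)`. The resulting
`(V–∅)`-crusade can be made monotone without increasing its width: at a step `X → Y` with
`Y ⊄ X`, submodularity of the cut allows replacing `X` by `X ∪ Y` (if that lowers the cut of `X`)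
or else `Y` by the smaller bag `X ∩ Y` of no larger cut, and such moves cannot go on forever.
Hence `W ≤ max ((n - |A|) Δ) γ(A)`, and `γ(A) < W` rules out the second alternative.
-/

section Cut

variable (G : SimpleGraph V) [DecidableRel G.Adj]

lemma cut_inter_add_cut_union_le (X Y : Finset V) :
    cut G (X ∩ Y) + cut G (X ∪ Y) ≤ cut G X + cut G Y := by
  unfold cut
  rw [← card_union_add_card_inter (filter _ (X ×ˢ Xᶜ)),
    ← card_union_add_card_inter (filter _ ((X ∩ Y) ×ˢ (X ∩ Y)ᶜ))]
  refine add_le_add (card_le_card fun p => ?_) (card_le_card fun p => ?_) <;>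
    simp only [mem_union, mem_inter, mem_filter, mem_product, mem_compl] <;> tauto

lemma cut_le_card_compl_mul_maxDegree (A : Finset V) :
    cut G A ≤ Aᶜ.card * G.maxDegree := by
  rw [cut, mul_comm]
  refine card_le_mul_card_image_of_maps_to (f := Prod.snd)
    (fun p hp => (mem_product.1 (mem_filter.1 hp).1).2) _ fun v _ => ?_
  calc _ ≤ (G.neighborFinset v ×ˢ {v}).card := card_le_card fun p hp => by
          obtain ⟨hcut, rfl⟩ := mem_filter.1 hp
          obtain ⟨-, hadj⟩ := mem_filter.1 hcut
          exact mem_product.2 ⟨(G.mem_neighborFinset _ _).2 hadj.symm, mem_singleton_self _⟩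
    _ ≤ G.maxDegree := by simpa using G.degree_le_maxDegree v

end Cut

lemma apply_update_le {ι β γ : Type*} [DecidableEq ι] [Preorder γ] (f : β → γ) (g : ι → β)
    {i : ι} {b : β} (h : f b ≤ f (g i)) (j : ι) : f (Function.update g i b j) ≤ f (g j) := by
  rcases eq_or_ne j i with rfl | hj
  · simpa
  · simp [hj]

lemma exists_crusade_of_subset {B C : Finset V} (hCB : C ⊆ B) :
    ∃ k ω, IsCrusade B C k ω ∧ ∀ j, C ⊆ ω j := by
  let e := Fintype.equivFin V
  refine ⟨Fintype.card V, fun j => C ∪ B.filter fun v => j ≤ e v, ⟨?_, ?_, fun j _ => ?_⟩,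
    fun j => subset_union_left⟩
  · simpa using hCB
  · ext v; simp [(e v).isLt]
  · have hfiber : ∀ v ∈ (C ∪ B.filter fun v => j ≤ e v) \ (C ∪ B.filter fun v => j + 1 ≤ e v),
        (e v : ℕ) = j := fun v hv => by
      simp only [mem_sdiff, mem_union, mem_filter, not_or, not_and, not_le] at hv
      obtain ⟨hvC | ⟨hvB, hjv⟩, hvC', hvj⟩ := hv
      · exact absurd hvC hvC'
      · have := hvj hvB
        omega
    exact card_le_one.2 fun a ha b hb =>
      e.injective (Fin.ext ((hfiber a ha).trans (hfiber b hb).symm))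

def appendBags {β : Type*} (k₁ : ℕ) (ω₁ ω₂ : ℕ → β) (i : ℕ) : β :=
  if i ≤ k₁ then ω₁ i else ω₂ (i - k₁)

section Crusade

variable {β : Type*} {k₁ : ℕ} {ω₁ ω₂ : ℕ → β} {i : ℕ}

lemma appendBags_of_le (hi : i ≤ k₁) : appendBags k₁ ω₁ ω₂ i = ω₁ i := if_pos hi

lemma appendBags_of_ge (h : ω₁ k₁ = ω₂ 0) (hi : k₁ ≤ i) :
    appendBags k₁ ω₁ ω₂ i = ω₂ (i - k₁) := by
  rcases hi.eq_or_lt with rfl | hi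
  · simp [appendBags, h]
  · exact if_neg hi.not_ge

variable {α : Type*} [DecidableEq α] {A B C : Finset α} {k : ℕ} {ω : ℕ → Finset α}

lemma IsCrusade.update (h : IsCrusade A B k ω) (hik : i + 1 < k) {Z : Finset α}
    (h₁ : (ω i \ Z).card ≤ 1) (h₂ : (Z \ ω (i + 2)).card ≤ 1) :
    IsCrusade A B k (Function.update ω (i + 1) Z) := by
  obtain ⟨h0, hk, hstep⟩ := h
  refine ⟨by simpa using h0, by simpa [hik.ne'] using hk, fun j hj => ?_⟩
  rcases eq_or_ne j i with rfl | hji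
  · simpa using h₁
  rcases eq_or_ne j (i + 1) with rfl | hji'
  · simpa using h₂
  rw [Function.update_of_ne hji', Function.update_of_ne (by omega)]
  exact hstep j hj

lemma IsCrusade.append {k₂ : ℕ} {ω₁ ω₂ : ℕ → Finset α} (h₁ : IsCrusade A B k₁ ω₁)
    (h₂ : IsCrusade B C k₂ ω₂) : IsCrusade A C (k₁ + k₂) (appendBags k₁ ω₁ ω₂) := by
  have hjoin : ω₁ k₁ = ω₂ 0 := h₁.2.1.trans h₂.1.symm
  refine ⟨by simp [appendBags_of_le, h₁.1], ?_, fun j hj => ?_⟩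
  · simpa [appendBags_of_ge hjoin] using h₂.2.1
  rcases lt_or_ge j k₁ with hj₁ | hj₁
  · simpa [appendBags_of_le, hj₁.le, hj₁] using h₁.2.2 j hj₁
  · rw [appendBags_of_ge hjoin hj₁, appendBags_of_ge hjoin (by omega),
      show j + 1 - k₁ = j - k₁ + 1 by omega]
    exact h₂.2.2 _ (by omega)

end Crusade

section Width

variable (G : SimpleGraph V) [DecidableRel G.Adj] {k : ℕ} {ω : ℕ → Finset V}

lemma width_le_iff {w : ℕ} : width G k ω ≤ w ↔ ∀ i, 1 ≤ i → i ≤ k → cut G (ω i) ≤ w := by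
  simp [width, Finset.sup_le_iff, and_imp]

lemma cut_le_width {i : ℕ} (h₁ : 1 ≤ i) (h₂ : i ≤ k) : cut G (ω i) ≤ width G k ω :=
  (width_le_iff G).1 le_rfl i h₁ h₂

lemma width_update_le {i : ℕ} {Z : Finset V} (h : cut G Z ≤ cut G (ω i)) :
    width G k (Function.update ω i Z) ≤ width G k ω :=
  Finset.sup_mono_fun fun j _ => apply_update_le (cut G) ω h j

lemma width_appendBags_le {k₁ k₂ : ℕ} {ω₁ ω₂ : ℕ → Finset V} (h : ω₁ k₁ = ω₂ 0) :
    width G (k₁ + k₂) (appendBags k₁ ω₁ ω₂) ≤ max (width G k₁ ω₁) (width G k₂ ω₂) := by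
  refine (width_le_iff G).2 fun i hi₁ hi₂ => ?_
  rcases le_or_gt i k₁ with hik | hik
  · rw [appendBags_of_le hik]
    exact le_max_of_le_left (cut_le_width G hi₁ hik)
  · rw [appendBags_of_ge h hik.le]
    exact le_max_of_le_right (cut_le_width G (by omega) (by omega))

lemma width_le_of_subset {A : Finset V} (hA : ∀ j, A ⊆ ω j) :
    width G k ω ≤ (Fintype.card V - A.card) * G.maxDegree := by
  refine (width_le_iff G).2 fun i _ _ => (cut_le_card_compl_mul_maxDegree G _).trans ?_
  rw [← card_compl]
  gcongr
  exact hA i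

end Width

section Monotone

variable (G : SimpleGraph V) [DecidableRel G.Adj]

/-- Orders bags lexicographically by cut, then size, since a size never exceeds
`Fintype.card V`. -/
def bagWeight (S : Finset V) : ℕ :=
  (Fintype.card V + 1) * cut G S + S.card

def crusadeWeight (k : ℕ) (ω : ℕ → Finset V) : ℕ :=
  ∑ j ∈ range (k + 1), bagWeight G (ω j)

lemma bagWeight_lt_of_cut_lt {S T : Finset V} (h : cut G S < cut G T) :
    bagWeight G S < bagWeight G T := by
  have hS : S.card ≤ Fintype.card V := card_le_univ S
  have : (Fintype.card V + 1) * (cut G S + 1) ≤ (Fintype.card V + 1) * cut G T :=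
    Nat.mul_le_mul_left _ h
  simp only [bagWeight]
  linarith

lemma bagWeight_lt_of_ssubset {S T : Finset V} (hcut : cut G S ≤ cut G T) (hST : S ⊂ T) :
    bagWeight G S < bagWeight G T := by
  simp only [bagWeight]
  exact add_lt_add_of_le_of_lt (Nat.mul_le_mul_left _ hcut) (card_lt_card hST)

lemma crusadeWeight_update_lt {k i : ℕ} {ω : ℕ → Finset V} (hi : i ≤ k) {Z : Finset V}
    (h : bagWeight G Z < bagWeight G (ω i)) :
    crusadeWeight G k (Function.update ω i Z) < crusadeWeight G k ω :=
  sum_lt_sum (fun j _ => apply_update_le (bagWeight G) ω h.le j)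
    ⟨i, mem_range.2 (Nat.lt_succ_of_le hi), by simpa using h⟩

lemma exists_lighter_of_not_isMonotone {k : ℕ} {ω : ℕ → Finset V}
    (h : IsCrusade univ ∅ k ω) (hmono : ¬ IsMonotone k ω) :
    ∃ ω', IsCrusade univ ∅ k ω' ∧ width G k ω' ≤ width G k ω ∧
      crusadeWeight G k ω' < crusadeWeight G k ω := by
  obtain ⟨i, hik, hXY⟩ : ∃ i < k, ¬ ω (i + 1) ⊆ ω i := by simpa [IsMonotone] using hmono
  obtain ⟨j, rfl⟩ : ∃ j, i = j + 1 :=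
    Nat.exists_eq_add_one.2 (Nat.pos_of_ne_zero fun h0 => hXY (by simp [h0, h.1]))
  have hjk : j + 2 < k := by
    refine lt_of_le_of_ne hik fun hk => hXY ?_
    rw [hk, h.2.1]
    exact empty_subset _
  set X := ω (j + 1)
  set Y := ω (j + 2)
  have hstep : (X \ Y).card ≤ 1 := h.2.2 (j + 1) (by omega)
  by_cases hunion : cut G (X ∪ Y) < cut G X
  · refine ⟨Function.update ω (j + 1) (X ∪ Y), h.update (by omega) ?_ ?_,
      width_update_le G hunion.le, crusadeWeight_update_lt G (by omega)
        (bagWeight_lt_of_cut_lt G hunion)⟩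
    · exact (card_le_card (sdiff_subset_sdiff subset_rfl subset_union_left)).trans
        (h.2.2 j (by omega))
    · rwa [union_sdiff_right]
  · have hinter : cut G (X ∩ Y) ≤ cut G Y := by
      have := cut_inter_add_cut_union_le G X Y
      omega
    refine ⟨Function.update ω (j + 2) (X ∩ Y), h.update (i := j + 1) (by omega) ?_ ?_,
      width_update_le G hinter, crusadeWeight_update_lt G (by omega)
        (bagWeight_lt_of_ssubset G hinter (inter_subset_right.ssubset_of_not_subset ?_))⟩
    · rwa [sdiff_inter_self_left]
    · exact (card_le_card (sdiff_subset_sdiff inter_subset_right subset_rfl)).trans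
        (h.2.2 (j + 2) hjk)
    · exact fun hYXY => hXY (hYXY.trans inter_subset_left)

theorem cutWidth_le_width {k : ℕ} {ω : ℕ → Finset V} (h : IsCrusade univ ∅ k ω) :
    cutWidth G ≤ width G k ω := by
  by_cases hmono : IsMonotone k ω
  · exact Nat.sInf_le ⟨k, ω, h, hmono, rfl⟩
  obtain ⟨ω', h', hwidth, hlighter⟩ := exists_lighter_of_not_isMonotone G h hmono
  exact (cutWidth_le_width h').trans hwidth
termination_by crusadeWeight G k ω

end Monotone

lemma exists_crusade_width_eq_resilience (G : SimpleGraph V) [DecidableRel G.Adj]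
    (A : Finset V) : ∃ k ω, IsCrusade A ∅ k ω ∧ width G k ω = resilience G A := by
  obtain ⟨k, ω, h, -⟩ := exists_crusade_of_subset (empty_subset A)
  show resilience G A ∈ {w | ∃ k ω, IsCrusade A ∅ k ω ∧ width G k ω = w}
  exact Nat.sInf_mem ⟨_, k, ω, h, rfl⟩

theorem cutWidth_le_max_resilience (G : SimpleGraph V) [DecidableRel G.Adj] (A : Finset V) :
    cutWidth G ≤ max ((Fintype.card V - A.card) * G.maxDegree) (resilience G A) := by
  obtain ⟨k₁, ω₁, h₁, hA₁⟩ := exists_crusade_of_subset (subset_univ A)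
  obtain ⟨k₂, ω₂, h₂, hw₂⟩ := exists_crusade_width_eq_resilience G A
  calc cutWidth G ≤ width G (k₁ + k₂) (appendBags k₁ ω₁ ω₂) := cutWidth_le_width G (h₁.append h₂)
    _ ≤ max (width G k₁ ω₁) (width G k₂ ω₂) := width_appendBags_le G (h₁.2.1.trans h₂.1.symm)
    _ ≤ _ := hw₂ ▸ max_le_max_right _ (width_le_of_subset G hA₁)

theorem cutWidth_le_of_resilience_lt_general (G : SimpleGraph V) [DecidableRel G.Adj]
    (A : Finset V) (hA : resilience G A < cutWidth G) :
    cutWidth G ≤ (Fintype.card V - A.card) * G.maxDegree :=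
  (le_max_iff.1 (cutWidth_le_max_resilience G A)).resolve_right hA.not_ge

theorem cutWidth_le_of_resilience_lt (G : SimpleGraph V) [DecidableRel G.Adj]
    (hconn : G.Connected) (hΔ : 0 < G.maxDegree)
    (hW : G.maxDegree ≤ cutWidth G)
    (A : Finset V) (hA : resilience G A < cutWidth G) :
    cutWidth G ≤ (Fintype.card V - A.card) * G.maxDegree :=
  cutWidth_le_of_resilience_lt_general G A hA
end
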